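/- Let X and Y be finite nonempty types and let p be a probability mass function on X × Y (p(x,y) ≥ 0 for all (x,y) and ∑_{x,y} p(x,y) = 1), with marginals p_X(x) = ∑_y p(x,y) and p_Y(y) = ∑_x p(x,y). Define the Shannon entropy H(X) = −∑_x p_X(x) log p_X(x) and the mutual information I(X;Y) = ∑_{x,y} p(x,y) log( p(x,y) / (p_X(x) p_Y(y)) ), with the convention 0 log 0 = 0. Let q : X × Y → ℝ be any family of conditional probability mass functions, i.e. q(x|y) ≥ 0 and ∑_x q(x|y) = 1 for every y, and assume q(x|y) > 0 whenever p(x,y) > 0. Then I(X;Y) ≥ H(X) + ∑_{x,y} p(x,y) log q(x|y). -/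

import Mathlib

/-!
Writing `r(x,y) = p_Y(y) q(x|y)`, which has the same total mass as `p`, the gap
`I(X;Y) - H(X) - ∑ p log q` is exactly `∑ p log (p / r)`, a Kullback–Leibler divergence, and
Gibbs' inequality `a log (a / b) ≥ a - b` makes it nonnegative.
-/

open Finset Real

lemma sub_le_mul_log_div {a b : ℝ} (ha : 0 ≤ a) (hb : 0 ≤ b) (hab : 0 < a → 0 < b) :
    a - b ≤ a * log (a / b) := by
  rcases ha.eq_or_lt with rfl | ha
  · simpa using hb
  have hb := hab ha
  have h := one_sub_inv_le_log_of_pos (div_pos ha hb)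
  calc a - b = a * (1 - (a / b)⁻¹) := by field_simp
    _ ≤ a * log (a / b) := by gcongr

lemma sum_sub_sum_le_sum_mul_log_div {ι : Type*} [Fintype ι] {a b : ι → ℝ}
    (ha : ∀ i, 0 ≤ a i) (hb : ∀ i, 0 ≤ b i) (hab : ∀ i, 0 < a i → 0 < b i) :
    ∑ i, a i - ∑ i, b i ≤ ∑ i, a i * log (a i / b i) := by
  rw [← sum_sub_distrib]
  exact sum_le_sum fun i _ => sub_le_mul_log_div (ha i) (hb i) (hab i)

lemma mul_log_div_mul_eq {a m n q : ℝ} (hm : a ≠ 0 → m ≠ 0) (hn : a ≠ 0 → n ≠ 0)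
    (hq : a ≠ 0 → q ≠ 0) :
    a * log (a / (m * n)) = a * log (a / (n * q)) - a * log m + a * log q := by
  rcases eq_or_ne a 0 with rfl | ha
  · simp
  rw [log_div ha (mul_ne_zero (hm ha) (hn ha)), log_div ha (mul_ne_zero (hn ha) (hq ha)),
    log_mul (hm ha) (hn ha), log_mul (hn ha) (hq ha)]
  ring

theorem barber_agakov_bound_general {X Y : Type*} [Fintype X] [Fintype Y]
    (p : X → Y → ℝ)
    (hp_nonneg : ∀ x y, 0 ≤ p x y)
    (q : X → Y → ℝ)
    (hq_nonneg : ∀ x y, 0 ≤ q x y)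
    (hq_sum : ∀ y, ∑ x, q x y = 1)
    (hq_pos : ∀ x y, 0 < p x y → 0 < q x y) :
    (∑ x, ∑ y, p x y *
        Real.log (p x y / ((∑ y', p x y') * (∑ x', p x' y)))) ≥
      (- ∑ x, (∑ y, p x y) * Real.log (∑ y, p x y)) +
        ∑ x, ∑ y, p x y * Real.log (q x y) := by
  have hp_le_pX x y : p x y ≤ ∑ y', p x y' :=
    single_le_sum (fun y' _ => hp_nonneg x y') (mem_univ y)
  have hp_le_pY x y : p x y ≤ ∑ x', p x' y :=
    single_le_sum (fun x' _ => hp_nonneg x' y) (mem_univ x)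
  set r : X → Y → ℝ := fun x y => (∑ x', p x' y) * q x y
  have hr_sum : ∑ x, ∑ y, r x y = ∑ x, ∑ y, p x y := by
    rw [sum_comm, sum_comm (f := p)]
    simp only [r, ← mul_sum, hq_sum, mul_one]
  have hkl : 0 ≤ ∑ x, ∑ y, p x y * log (p x y / r x y) := by
    have hgibbs := sum_sub_sum_le_sum_mul_log_div (a := fun z : X × Y => p z.1 z.2)
      (b := fun z => r z.1 z.2) (fun z => hp_nonneg z.1 z.2)
      (fun z => mul_nonneg ((hp_nonneg z.1 z.2).trans (hp_le_pY z.1 z.2)) (hq_nonneg z.1 z.2))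
      (fun z hz => mul_pos (hz.trans_le (hp_le_pY z.1 z.2)) (hq_pos z.1 z.2 hz))
    rwa [Fintype.sum_prod_type', Fintype.sum_prod_type', hr_sum, sub_self,
      Fintype.sum_prod_type' (f := fun x y => p x y * log (p x y / r x y))] at hgibbs
  have hsplit x y := mul_log_div_mul_eq (a := p x y) (q := q x y)
    (fun h => ((hp_nonneg x y).lt_of_ne' h |>.trans_le (hp_le_pX x y)).ne')
    (fun h => ((hp_nonneg x y).lt_of_ne' h |>.trans_le (hp_le_pY x y)).ne')
    (fun h => (hq_pos x y ((hp_nonneg x y).lt_of_ne' h)).ne')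
  simp only [hsplit, sum_add_distrib, sum_sub_distrib, ← sum_mul]
  linarith

/-- Barber–Agakov variational lower bound on mutual information (Theorem 1):
for a pmf `p` on `X × Y` with marginals `pX`, `pY`, entropy `H(X)` and mutual
information `I(X;Y)` given by explicit finite sums (natural log, `0 log 0 = 0`),
and any family of conditional pmfs `q(x|y)` positive wherever `p(x,y) > 0`,
we have `I(X;Y) ≥ H(X) + ∑ p(x,y) log q(x|y)`. -/
theorem barber_agakov_bound {X Y : Type*} [Fintype X] [Fintype Y]
    [Nonempty X] [Nonempty Y]
    (p : X → Y → ℝ)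
    (hp_nonneg : ∀ x y, 0 ≤ p x y)
    (hp_sum : ∑ x, ∑ y, p x y = 1)
    (q : X → Y → ℝ)
    (hq_nonneg : ∀ x y, 0 ≤ q x y)
    (hq_sum : ∀ y, ∑ x, q x y = 1)
    (hq_pos : ∀ x y, 0 < p x y → 0 < q x y) :
    (∑ x, ∑ y, p x y *
        Real.log (p x y / ((∑ y', p x y') * (∑ x', p x' y)))) ≥
      (- ∑ x, (∑ y, p x y) * Real.log (∑ y, p x y)) +
        ∑ x, ∑ y, p x y * Real.log (q x y) :=
  barber_agakov_bound_general p hp_nonneg q hq_nonneg hq_sum hq_pos
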